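/- arXiv:1506.00673 — 5 statements merged into one kernel-verified Lean document; each statement's English description precedes it below -/
import Mathlib

section
/- Let f : ℝ² → ℝ be a measurable, nonnegative, integrable joint probability density with marginals f_X and f_Y. Let ψ₁, ψ₂ : ℝ → ℝ be C¹ diffeomorphisms of ℝ with everywhere strictly positive derivatives. Define the transformed joint density g(u,v) = f(ψ₁⁻¹(u), ψ₂⁻¹(v)) · (ψ₁⁻¹)'(u) · (ψ₂⁻¹)'(v), with marginals g_U(u) = ∫ g(u,v) dv and g_V(v) = ∫ g(u,v) du. Then ∫∫ √(g(u,v) · g_U(u) · g_V(v)) du dv = ∫∫ √(f(x,y) · f_X(x) · f_Y(y)) dx dy, and consequently the Hellinger distance between g and g_U g_V equals the Hellinger distance between f and f_X f_Y; i.e., mutual dependence is invariant under strictly monotonic transformations of each variable. -/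
/-!
Put `Φ = φ₁ × φ₂` and `J(u, v) = φ₁'(u) φ₂'(v) > 0`. Then `g = J · (f ∘ Φ)`, and the
one-dimensional change of variables in each marginal gives `g_U g_V = J · ((f_X f_Y) ∘ Φ)`.
Both integrands are positively 1-homogeneous functions of the pair (joint density, product of
marginals), so they also just pick up the factor `J`, which the two-dimensional change of
variables along `Φ` absorbs.
-/
open MeasureTheory Function

lemma ContinuousLinearMap.det_prodMap_toSpanSingleton (c d : ℝ) :
    ((toSpanSingleton ℝ c).prodMap (toSpanSingleton ℝ d)).det = c * d := by
  rw [det, coe_prodMap, LinearMap.det_prodMap]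
  simp

section InverseFunction

variable {ψ φ : ℝ → ℝ}

lemma continuous_of_rightInverse_of_strictMono (hψ : StrictMono ψ) (hφ : RightInverse φ ψ) :
    Continuous φ :=
  (hψ.orderIsoOfRightInverse ψ φ hφ).symm.continuous

lemma hasDerivAt_of_rightInverse_of_deriv_pos (hψ' : ∀ x, 0 < deriv ψ x)
    (hφ : RightInverse φ ψ) (u : ℝ) : HasDerivAt φ (deriv ψ (φ u))⁻¹ u :=
  HasDerivAt.of_local_left_inverse
    (continuous_of_rightInverse_of_strictMono (strictMono_of_deriv_pos hψ') hφ).continuousAt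
    (differentiableAt_of_deriv_ne_zero (hψ' _).ne').hasDerivAt (hψ' _).ne'
    (Filter.Eventually.of_forall hφ)

lemma hasDerivAt_deriv_of_rightInverse_of_deriv_pos (hψ' : ∀ x, 0 < deriv ψ x)
    (hφ : RightInverse φ ψ) (u : ℝ) : HasDerivAt φ (deriv φ u) u :=
  (hasDerivAt_of_rightInverse_of_deriv_pos hψ' hφ u).differentiableAt.hasDerivAt

lemma deriv_pos_of_rightInverse_of_deriv_pos (hψ' : ∀ x, 0 < deriv ψ x)
    (hφ : RightInverse φ ψ) (u : ℝ) : 0 < deriv φ u := by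
  rw [(hasDerivAt_of_rightInverse_of_deriv_pos hψ' hφ u).deriv]
  exact inv_pos.mpr (hψ' _)

end InverseFunction

section ChangeOfVariables

variable {F : Type*} [NormedAddCommGroup F] [NormedSpace ℝ F]
  {φ φ' φ₁ φ₂ φ₁' φ₂' : ℝ → ℝ}

lemma integral_abs_deriv_smul_comp_of_bijective (hφ : ∀ u, HasDerivAt φ (φ' u) u)
    (hbij : Bijective φ) (k : ℝ → F) :
    ∫ u, |φ' u| • k (φ u) = ∫ x, k x := by
  simpa [hbij.surjective.range_eq] using (integral_image_eq_integral_abs_deriv_smul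
    MeasurableSet.univ (fun u _ => (hφ u).hasDerivWithinAt) hbij.injective.injOn k).symm

lemma integral_abs_deriv_smul_comp_prodMap_of_bijective
    (hφ₁ : ∀ u, HasDerivAt φ₁ (φ₁' u) u) (hφ₂ : ∀ v, HasDerivAt φ₂ (φ₂' v) v)
    (hbij₁ : Bijective φ₁) (hbij₂ : Bijective φ₂) (k : ℝ × ℝ → F) :
    ∫ p : ℝ × ℝ, |φ₁' p.1 * φ₂' p.2| • k (φ₁ p.1, φ₂ p.2) = ∫ p, k p := by
  have h := integral_image_eq_integral_abs_det_fderiv_smul volume MeasurableSet.univ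
    (fun p _ => ((hφ₁ p.1).hasFDerivAt.prodMap p (hφ₂ p.2).hasFDerivAt).hasFDerivWithinAt)
    (hbij₁.injective.prodMap hbij₂.injective).injOn k
  simp only [Set.image_univ, Set.range_prodMap, hbij₁.surjective.range_eq,
    hbij₂.surjective.range_eq, Set.univ_prod_univ, Measure.restrict_univ,
    ContinuousLinearMap.det_prodMap_toSpanSingleton] at h
  exact h.symm

lemma integral_comp_prodMap_of_homogeneous {H : ℝ → ℝ → ℝ}
    (hH : ∀ c, 0 ≤ c → ∀ a b, H (c * a) (c * b) = c * H a b)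
    (hφ₁ : ∀ u, HasDerivAt φ₁ (φ₁' u) u) (hφ₂ : ∀ v, HasDerivAt φ₂ (φ₂' v) v)
    (hφ₁' : ∀ u, 0 ≤ φ₁' u) (hφ₂' : ∀ v, 0 ≤ φ₂' v)
    (hbij₁ : Bijective φ₁) (hbij₂ : Bijective φ₂) (a b : ℝ × ℝ → ℝ) :
    ∫ p : ℝ × ℝ, H (φ₁' p.1 * φ₂' p.2 * a (φ₁ p.1, φ₂ p.2))
        (φ₁' p.1 * φ₂' p.2 * b (φ₁ p.1, φ₂ p.2)) = ∫ p, H (a p) (b p) := by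
  rw [← integral_abs_deriv_smul_comp_prodMap_of_bijective hφ₁ hφ₂ hbij₁ hbij₂
    fun p => H (a p) (b p)]
  congr 1 with p
  have hJ := mul_nonneg (hφ₁' p.1) (hφ₂' p.2)
  rw [hH _ hJ, abs_of_nonneg hJ, smul_eq_mul]

end ChangeOfVariables

lemma Real.sqrt_mul_mul_mul_self_left (c : ℝ) (hc : 0 ≤ c) (a b : ℝ) :
    √(c * a * (c * b)) = c * √(a * b) := by
  rw [show c * a * (c * b) = c ^ 2 * (a * b) by ring, Real.sqrt_mul (sq_nonneg c),
    Real.sqrt_sq hc]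

lemma Real.sq_sqrt_mul_sub_sqrt_mul (c : ℝ) (hc : 0 ≤ c) (a b : ℝ) :
    (√(c * a) - √(c * b)) ^ 2 = c * (√a - √b) ^ 2 := by
  rw [Real.sqrt_mul hc, Real.sqrt_mul hc, ← mul_sub, mul_pow, Real.sq_sqrt hc]

theorem mutual_dependence_invariant_monotone_transform_general
    (f : ℝ × ℝ → ℝ)
    (fX fY : ℝ → ℝ)
    (hfX : ∀ x, fX x = ∫ y, f (x, y))
    (hfY : ∀ y, fY y = ∫ x, f (x, y))
    (ψ₁ ψ₂ φ₁ φ₂ : ℝ → ℝ)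
    (hψ₁' : ∀ x, 0 < deriv ψ₁ x) (hψ₂' : ∀ x, 0 < deriv ψ₂ x)
    (hφ₁left : Function.LeftInverse φ₁ ψ₁) (hφ₁right : Function.RightInverse φ₁ ψ₁)
    (hφ₂left : Function.LeftInverse φ₂ ψ₂) (hφ₂right : Function.RightInverse φ₂ ψ₂)
    (g : ℝ × ℝ → ℝ)
    (hg : ∀ u v, g (u, v) = f (φ₁ u, φ₂ v) * deriv φ₁ u * deriv φ₂ v)
    (gU gV : ℝ → ℝ)
    (hgU : ∀ u, gU u = ∫ v, g (u, v))
    (hgV : ∀ v, gV v = ∫ u, g (u, v)) :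
    (∫ p : ℝ × ℝ, Real.sqrt (g p * gU p.1 * gV p.2)
        = ∫ p : ℝ × ℝ, Real.sqrt (f p * fX p.1 * fY p.2)) ∧
    Real.sqrt ((1 / 2) * ∫ p : ℝ × ℝ,
        (Real.sqrt (g p) - Real.sqrt (gU p.1 * gV p.2)) ^ 2)
      = Real.sqrt ((1 / 2) * ∫ p : ℝ × ℝ,
        (Real.sqrt (f p) - Real.sqrt (fX p.1 * fY p.2)) ^ 2) := by
  have hd₁ := hasDerivAt_deriv_of_rightInverse_of_deriv_pos hψ₁' hφ₁right
  have hd₂ := hasDerivAt_deriv_of_rightInverse_of_deriv_pos hψ₂' hφ₂right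
  have hpos₁ := deriv_pos_of_rightInverse_of_deriv_pos hψ₁' hφ₁right
  have hpos₂ := deriv_pos_of_rightInverse_of_deriv_pos hψ₂' hφ₂right
  have hbij₁ : Bijective φ₁ := ⟨hφ₁right.injective, hφ₁left.surjective⟩
  have hbij₂ : Bijective φ₂ := ⟨hφ₂right.injective, hφ₂left.surjective⟩
  have hgU' (u : ℝ) : gU u = deriv φ₁ u * fX (φ₁ u) := by
    rw [hgU, hfX, ← integral_abs_deriv_smul_comp_of_bijective hd₂ hbij₂ fun y => f (φ₁ u, y),
      ← integral_const_mul]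
    congr 1 with v
    rw [hg, abs_of_pos (hpos₂ v), smul_eq_mul]; ring
  have hgV' (v : ℝ) : gV v = deriv φ₂ v * fY (φ₂ v) := by
    rw [hgV, hfY, ← integral_abs_deriv_smul_comp_of_bijective hd₁ hbij₁ fun x => f (x, φ₂ v),
      ← integral_const_mul]
    congr 1 with u
    rw [hg, abs_of_pos (hpos₁ u), smul_eq_mul]; ring
  have hg' : ∀ p : ℝ × ℝ, g p = deriv φ₁ p.1 * deriv φ₂ p.2 * f (φ₁ p.1, φ₂ p.2) :=
    fun ⟨u, v⟩ => by rw [hg]; ring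
  have hm' (p : ℝ × ℝ) : gU p.1 * gV p.2 =
      deriv φ₁ p.1 * deriv φ₂ p.2 * (fX (φ₁ p.1) * fY (φ₂ p.2)) := by
    rw [hgU', hgV']; ring
  have key {H : ℝ → ℝ → ℝ} (hH : ∀ c, 0 ≤ c → ∀ a b, H (c * a) (c * b) = c * H a b) :=
    integral_comp_prodMap_of_homogeneous hH hd₁ hd₂ (fun u => (hpos₁ u).le)
      (fun v => (hpos₂ v).le) hbij₁ hbij₂ f (fun p => fX p.1 * fY p.2)
  constructor
  · simp only [mul_assoc]
    simp only [hg', hm']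
    exact key (H := fun a b => √(a * b)) Real.sqrt_mul_mul_mul_self_left
  · simp only [hg', hm']
    exact congrArg (fun I => √(1 / 2 * I))
      (key (H := fun a b => (√a - √b) ^ 2) Real.sq_sqrt_mul_sub_sqrt_mul)

/-- Mutual dependence is invariant under strictly monotonic (C¹
diffeomorphism with strictly positive derivative) transformations of each
variable: if `(X,Y)` has density `f` and `g` is the density of
`(ψ₁(X), ψ₂(Y))`, then the Bhattacharyya coefficient and the Hellinger
distance between joint and product of marginals are equal for `f` and `g`. -/
theorem mutual_dependence_invariant_monotone_transform
    (f : ℝ × ℝ → ℝ)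
    (hf_meas : Measurable f) (hf_nonneg : ∀ p, 0 ≤ f p)
    (hf_int : Integrable f) (hf_one : ∫ p, f p = 1)
    (fX fY : ℝ → ℝ)
    (hfX : ∀ x, fX x = ∫ y, f (x, y))
    (hfY : ∀ y, fY y = ∫ x, f (x, y))
    (ψ₁ ψ₂ φ₁ φ₂ : ℝ → ℝ)
    (hψ₁ : ContDiff ℝ 1 ψ₁) (hψ₂ : ContDiff ℝ 1 ψ₂)
    (hψ₁' : ∀ x, 0 < deriv ψ₁ x) (hψ₂' : ∀ x, 0 < deriv ψ₂ x)
    (hψ₁bij : Function.Bijective ψ₁) (hψ₂bij : Function.Bijective ψ₂)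
    (hφ₁left : Function.LeftInverse φ₁ ψ₁) (hφ₁right : Function.RightInverse φ₁ ψ₁)
    (hφ₂left : Function.LeftInverse φ₂ ψ₂) (hφ₂right : Function.RightInverse φ₂ ψ₂)
    (g : ℝ × ℝ → ℝ)
    (hg : ∀ u v, g (u, v) = f (φ₁ u, φ₂ v) * deriv φ₁ u * deriv φ₂ v)
    (gU gV : ℝ → ℝ)
    (hgU : ∀ u, gU u = ∫ v, g (u, v))
    (hgV : ∀ v, gV v = ∫ u, g (u, v)) :
    (∫ p : ℝ × ℝ, Real.sqrt (g p * gU p.1 * gV p.2)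
        = ∫ p : ℝ × ℝ, Real.sqrt (f p * fX p.1 * fY p.2)) ∧
    Real.sqrt ((1 / 2) * ∫ p : ℝ × ℝ,
        (Real.sqrt (g p) - Real.sqrt (gU p.1 * gV p.2)) ^ 2)
      = Real.sqrt ((1 / 2) * ∫ p : ℝ × ℝ,
        (Real.sqrt (f p) - Real.sqrt (fX p.1 * fY p.2)) ^ 2) :=
  mutual_dependence_invariant_monotone_transform_general f fX fY hfX hfY ψ₁ ψ₂ φ₁ φ₂ hψ₁' hψ₂'
    hφ₁left hφ₁right hφ₂left hφ₂right g hg gU gV hgU hgV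
end

section
/- Let σ_x, σ_y > 0 and ρ ∈ (−1, 1). Let f_{XY}(x,y) = 1/(2π σ_x σ_y √(1−ρ²)) · exp(−(1/(2(1−ρ²)))(x²/σ_x² − 2ρxy/(σ_x σ_y) + y²/σ_y²)) be the centered bivariate normal density with correlation ρ, and let f_X(x) = (σ_x√(2π))^{−1} exp(−x²/(2σ_x²)) and f_Y(y) = (σ_y√(2π))^{−1} exp(−y²/(2σ_y²)) be its marginals. Then ∫∫_{ℝ²} √(f_{XY}(x,y) · f_X(x) · f_Y(y)) dx dy = (1−ρ²)^{1/4} / (1 − ρ²/4)^{1/2}. -/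
/-! The integrand is `√K · exp (-Q)` for a positive definite quadratic form `Q`: the exponents
of the three Gaussians add up, and the square root halves them. Completing the square, the shear
`(x, y) ↦ (x, y + (b / c) x)`, which preserves Lebesgue measure, splits `exp (-Q)` into a product
of one-dimensional Gaussians, so that `∫ exp (-Q) = π / √(det Q)`. -/

open MeasureTheory Real

theorem integral_comp_skew_add_right {α G E : Type*} [MeasurableSpace α] [MeasurableSpace G]
    [Add G] [MeasurableAdd₂ G] [NormedAddCommGroup E] [NormedSpace ℝ E]
    {μ : Measure α} {ν : Measure G} [SFinite μ] [SFinite ν] [ν.IsAddRightInvariant]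
    {g : α → G} (hg : Measurable g) {f : α × G → E} (hf : AEStronglyMeasurable f (μ.prod ν)) :
    ∫ p, f (p.1, p.2 + g p.1) ∂μ.prod ν = ∫ p, f p ∂μ.prod ν := by
  have hshear : MeasurePreserving (fun p : α × G => (p.1, p.2 + g p.1)) (μ.prod ν) (μ.prod ν) :=
    (MeasurePreserving.id μ).skew_product (by fun_prop)
      (.of_forall fun a => (measurePreserving_add_right ν (g a)).map_eq)
  rw [← integral_map hshear.measurable.aemeasurable (hshear.map_eq.symm ▸ hf), hshear.map_eq]

theorem integral_exp_neg_quadratic_form {a b c : ℝ} (hc : 0 < c) (hdet : 0 < a * c - b ^ 2) :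
    ∫ p : ℝ × ℝ, exp (-(a * p.1 ^ 2 + 2 * b * p.1 * p.2 + c * p.2 ^ 2)) =
      π / √(a * c - b ^ 2) := by
  set d := a * c - b ^ 2
  let f : ℝ × ℝ → ℝ := fun p => exp (-(d / c) * p.1 ^ 2) * exp (-c * p.2 ^ 2)
  have hsquare : ∀ p : ℝ × ℝ, exp (-(a * p.1 ^ 2 + 2 * b * p.1 * p.2 + c * p.2 ^ 2)) =
      f (p.1, p.2 + b / c * p.1) := fun p => by
    simp only [f, ← exp_add, d]
    congr 1
    field_simp
    ring
  have hf : AEStronglyMeasurable f (volume.prod volume) :=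
    (by fun_prop : Continuous f).aestronglyMeasurable
  simp_rw [hsquare, Measure.volume_eq_prod]
  rw [integral_comp_skew_add_right (g := fun x => b / c * x) (by fun_prop) hf,
    integral_prod_mul (fun x => exp (-(d / c) * x ^ 2)) (fun y => exp (-c * y ^ 2)),
    integral_gaussian, integral_gaussian, ← sqrt_mul (by positivity), div_mul_div_comm,
    div_mul_cancel₀ d hc.ne', sqrt_div' _ hdet.le, sqrt_mul_self pi_pos.le]

theorem bivariate_normal_mul_marginals_eq {σx σy ρ : ℝ} (hσx : σx ≠ 0) (hσy : σy ≠ 0)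
    (hρ : 1 - ρ ^ 2 ≠ 0) (x y : ℝ) :
    1 / (2 * π * σx * σy * √(1 - ρ ^ 2)) *
        exp (-(1 / (2 * (1 - ρ ^ 2))) *
          (x ^ 2 / σx ^ 2 - 2 * ρ * x * y / (σx * σy) + y ^ 2 / σy ^ 2)) *
      ((σx * √(2 * π))⁻¹ * exp (-x ^ 2 / (2 * σx ^ 2))) *
      ((σy * √(2 * π))⁻¹ * exp (-y ^ 2 / (2 * σy ^ 2))) =
    1 / (4 * π ^ 2 * σx ^ 2 * σy ^ 2 * √(1 - ρ ^ 2)) *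
      exp (-((2 - ρ ^ 2) / (4 * (1 - ρ ^ 2) * σx ^ 2) * x ^ 2 +
        2 * (-ρ / (4 * (1 - ρ ^ 2) * σx * σy)) * x * y +
        (2 - ρ ^ 2) / (4 * (1 - ρ ^ 2) * σy ^ 2) * y ^ 2)) ^ 2 := by
  rw [← exp_nat_mul, show ∀ a b c d e f : ℝ, a * b * (c * d) * (e * f) = a * c * e * (b * d * f)
    from fun _ _ _ _ _ _ => by ring, ← exp_add, ← exp_add]
  congr 1
  · field_simp
    rw [sq_sqrt (by positivity)]
    ring
  · congr 1
    field_simp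
    ring

/-- For a centered bivariate normal density with standard deviations
`σx, σy` and correlation `ρ`, the Bhattacharyya coefficient between the joint
density and the product of its marginals equals
`(1−ρ²)^{1/4} / (1−ρ²/4)^{1/2}`. -/
theorem bhattacharyya_coeff_bivariate_normal
    (σx σy ρ : ℝ) (hσx : 0 < σx) (hσy : 0 < σy) (hρ : ρ ∈ Set.Ioo (-1 : ℝ) 1)
    (fXY : ℝ × ℝ → ℝ) (fX fY : ℝ → ℝ)
    (hfXY : ∀ x y, fXY (x, y) =
      1 / (2 * Real.pi * σx * σy * Real.sqrt (1 - ρ ^ 2)) *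
        Real.exp (-(1 / (2 * (1 - ρ ^ 2))) *
          (x ^ 2 / σx ^ 2 - 2 * ρ * x * y / (σx * σy) + y ^ 2 / σy ^ 2)))
    (hfX : ∀ x, fX x = (σx * Real.sqrt (2 * Real.pi))⁻¹ *
      Real.exp (-x ^ 2 / (2 * σx ^ 2)))
    (hfY : ∀ y, fY y = (σy * Real.sqrt (2 * Real.pi))⁻¹ *
      Real.exp (-y ^ 2 / (2 * σy ^ 2))) :
    ∫ p : ℝ × ℝ, Real.sqrt (fXY p * fX p.1 * fY p.2)
      = (1 - ρ ^ 2) ^ ((1 : ℝ) / 4) / (1 - ρ ^ 2 / 4) ^ ((1 : ℝ) / 2) := by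
  have hs : 0 < 1 - ρ ^ 2 := by nlinarith [hρ.1, hρ.2]
  set K := 1 / (4 * π ^ 2 * σx ^ 2 * σy ^ 2 * √(1 - ρ ^ 2))
  set A := (2 - ρ ^ 2) / (4 * (1 - ρ ^ 2) * σx ^ 2)
  set B := -ρ / (4 * (1 - ρ ^ 2) * σx * σy)
  set C := (2 - ρ ^ 2) / (4 * (1 - ρ ^ 2) * σy ^ 2)
  have hdet : A * C - B ^ 2 = (4 - ρ ^ 2) / (16 * (1 - ρ ^ 2) * σx ^ 2 * σy ^ 2) := by
    simp only [A, B, C]; field_simp; ring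
  have hD : 0 < A * C - B ^ 2 := by rw [hdet]; exact div_pos (by linarith) (by positivity)
  calc ∫ p : ℝ × ℝ, √(fXY p * fX p.1 * fY p.2)
      = ∫ p : ℝ × ℝ, √K * exp (-(A * p.1 ^ 2 + 2 * B * p.1 * p.2 + C * p.2 ^ 2)) := by
        congr 1 with ⟨x, y⟩
        rw [hfXY, hfX, hfY, bivariate_normal_mul_marginals_eq hσx.ne' hσy.ne' hs.ne',
          sqrt_mul (by positivity), sqrt_sq (exp_pos _).le]
    _ = √(K * (π ^ 2 / (A * C - B ^ 2))) := by
        rw [integral_const_mul, integral_exp_neg_quadratic_form (div_pos (by linarith)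
          (by positivity)) hD, sqrt_mul (by positivity), sqrt_div' _ hD.le, sqrt_sq pi_pos.le]
    _ = √(√(1 - ρ ^ 2) / (1 - ρ ^ 2 / 4)) := by
        congr 1
        rw [hdet]; simp only [K]; field_simp; rw [sq_sqrt hs.le]; ring
    _ = _ := by
        rw [sqrt_div' _ (by linarith), sqrt_eq_rpow, sqrt_eq_rpow, sqrt_eq_rpow,
          ← rpow_mul hs.le]
        norm_num
end

section
/- Let σ_x, σ_y > 0 and ρ ∈ (−1, 1), and let f_{XY} be the centered bivariate normal density with standard deviations σ_x, σ_y and correlation ρ, with marginals f_X and f_Y. Then the mutual dependence equals d = d_h(f_{XY}, f_X f_Y) = √(1 − (1−ρ²)^{1/4}/(1−ρ²/4)^{1/2}); in particular, for jointly normal data the mutual dependence is a function M(ρ) of the correlation coefficient ρ alone. -/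
open MeasureTheory Real

lemma gauss2_integrable (a b c : ℝ) (ha : 0 < a) (hc : 0 < c) (h : b^2 < a*c) :
    Integrable (fun p : ℝ × ℝ => Real.exp (-(a*p.1^2 + 2*b*p.1*p.2 + c*p.2^2))) := by
  have hd : 0 < a*c - b^2 := by linarith
  set m := (a*c - b^2)/(2*c) with hm
  set m' := (a*c - b^2)/(2*a) with hm'
  have hm0 : 0 < m := by positivity
  have hm'0 : 0 < m' := by positivity
  have hint : Integrable (fun p : ℝ × ℝ =>
      Real.exp (-m * p.1^2) * Real.exp (-m' * p.2^2)) volume :=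
    (integrable_exp_neg_mul_sq hm0).mul_prod (integrable_exp_neg_mul_sq hm'0)
  refine hint.mono' ?_ ?_
  · apply Continuous.aestronglyMeasurable; continuity
  · filter_upwards with p
    rw [Real.norm_eq_abs, abs_of_pos (Real.exp_pos _), ← Real.exp_add]
    apply Real.exp_le_exp.2
    have key : m * p.1^2 + m' * p.2^2 ≤ a*p.1^2 + 2*b*p.1*p.2 + c*p.2^2 := by
      rw [hm, hm', div_mul_eq_mul_div, div_mul_eq_mul_div,
        div_add_div _ _ (by positivity : (2*c:ℝ) ≠ 0) (by positivity : (2*a:ℝ) ≠ 0),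
        div_le_iff₀ (by positivity)]
      nlinarith [sq_nonneg (b*p.1 + c*p.2), sq_nonneg (a*p.1 + b*p.2),
        mul_nonneg ha.le (sq_nonneg (b*p.1 + c*p.2)),
        mul_nonneg hc.le (sq_nonneg (a*p.1 + b*p.2))]
    linarith

lemma gauss2_integral (a b c : ℝ) (ha : 0 < a) (hc : 0 < c) (h : b^2 < a*c) :
    ∫ p : ℝ × ℝ, Real.exp (-(a*p.1^2 + 2*b*p.1*p.2 + c*p.2^2))
      = Real.pi / Real.sqrt (a*c - b^2) := by
  have hd : 0 < a*c - b^2 := by linarith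
  have hint := gauss2_integrable a b c ha hc h
  rw [show (volume : Measure (ℝ × ℝ)) = (volume : Measure ℝ).prod volume from rfl] at hint ⊢
  rw [integral_prod _ hint]
  have inner : ∀ x : ℝ, (∫ y : ℝ, Real.exp (-(a*x^2 + 2*b*x*y + c*y^2)))
      = Real.exp (-((a*c-b^2)/c) * x^2) * Real.sqrt (Real.pi / c) := by
    intro x
    have : ∀ y : ℝ, Real.exp (-(a*x^2 + 2*b*x*y + c*y^2))
        = Real.exp (-((a*c-b^2)/c) * x^2) * Real.exp (-c * (y + b*x/c)^2) := by
      intro y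
      rw [← Real.exp_add]
      congr 1
      field_simp
      ring
    simp_rw [this, integral_const_mul]
    congr 1
    rw [show (∫ y : ℝ, Real.exp (-c * (y + b*x/c)^2))
        = ∫ y : ℝ, Real.exp (-c * y^2) from
      integral_add_right_eq_self (fun y => Real.exp (-c * y^2)) (b*x/c)]
    exact integral_gaussian c
  simp_rw [inner, integral_mul_const, integral_gaussian]
  rw [← Real.sqrt_mul (by positivity)]
  rw [show Real.pi / ((a*c-b^2)/c) * (Real.pi / c) = Real.pi^2 / (a*c-b^2) by
    field_simp]
  rw [Real.sqrt_div (by positivity) _, Real.sqrt_sq Real.pi_pos.le]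

/-- For a centered bivariate normal density with standard deviations `σx, σy`
and correlation `ρ`, with marginals `fX`, `fY`, the mutual dependence
`d = d_h(f_{XY}, fX fY)` equals `√(1 − (1−ρ²)^{1/4}/(1−ρ²/4)^{1/2})`;
in particular it is a function of `ρ` alone. -/
theorem mutual_dependence_bivariate_normal
    (σx σy ρ : ℝ) (hσx : 0 < σx) (hσy : 0 < σy) (hρ : ρ ∈ Set.Ioo (-1 : ℝ) 1)
    (fXY : ℝ × ℝ → ℝ) (fX fY : ℝ → ℝ)
    (hfXY : ∀ x y, fXY (x, y) =
      1 / (2 * Real.pi * σx * σy * Real.sqrt (1 - ρ ^ 2)) *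
        Real.exp (-(1 / (2 * (1 - ρ ^ 2))) *
          (x ^ 2 / σx ^ 2 - 2 * ρ * x * y / (σx * σy) + y ^ 2 / σy ^ 2)))
    (hfX : ∀ x, fX x = (σx * Real.sqrt (2 * Real.pi))⁻¹ *
      Real.exp (-x ^ 2 / (2 * σx ^ 2)))
    (hfY : ∀ y, fY y = (σy * Real.sqrt (2 * Real.pi))⁻¹ *
      Real.exp (-y ^ 2 / (2 * σy ^ 2))) :
    Real.sqrt ((1 / 2) * ∫ p : ℝ × ℝ,
        (Real.sqrt (fXY p) - Real.sqrt (fX p.1 * fY p.2)) ^ 2)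
      = Real.sqrt (1 - (1 - ρ ^ 2) ^ ((1 : ℝ) / 4) / (1 - ρ ^ 2 / 4) ^ ((1 : ℝ) / 2)) := by
  obtain ⟨hρ1, hρ2⟩ := hρ
  have h1 : 0 < 1 - ρ ^ 2 := by nlinarith
  have h4 : 0 < 4 - ρ ^ 2 := by nlinarith
  have hπ : 0 < Real.pi := Real.pi_pos
  set s : ℝ := Real.sqrt (1 - ρ ^ 2) with hs
  have hs0 : 0 < s := Real.sqrt_pos.2 h1
  have hs2 : s ^ 2 = 1 - ρ ^ 2 := Real.sq_sqrt h1.le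
  set t : ℝ := Real.sqrt s with ht
  have ht0 : 0 < t := Real.sqrt_pos.2 hs0
  have ht2 : t ^ 2 = s := Real.sq_sqrt hs0.le
  set w : ℝ := Real.sqrt (4 - ρ ^ 2) with hw
  have hw0 : 0 < w := Real.sqrt_pos.2 h4
  have hw2 : w ^ 2 = 4 - ρ ^ 2 := Real.sq_sqrt h4.le
  have h2π : Real.sqrt (2 * Real.pi) ^ 2 = 2 * Real.pi := Real.sq_sqrt (by positivity)
  have h2π0 : 0 < Real.sqrt (2 * Real.pi) := Real.sqrt_pos.2 (by positivity)
  -- coefficients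
  set a1 : ℝ := 1 / (2 * (1 - ρ ^ 2) * σx ^ 2) with ha1
  set b1 : ℝ := -ρ / (2 * (1 - ρ ^ 2) * σx * σy) with hb1
  set c1 : ℝ := 1 / (2 * (1 - ρ ^ 2) * σy ^ 2) with hc1
  set a2 : ℝ := 1 / (2 * σx ^ 2) with ha2
  set c2 : ℝ := 1 / (2 * σy ^ 2) with hc2
  set a3 : ℝ := (a1 + a2) / 2 with ha3
  set b3 : ℝ := b1 / 2 with hb3
  set c3 : ℝ := (c1 + c2) / 2 with hc3
  set K1 : ℝ := 1 / (2 * Real.pi * σx * σy * s) with hK1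
  set K2 : ℝ := 1 / (2 * Real.pi * σx * σy) with hK2
  set K3 : ℝ := 1 / (2 * Real.pi * σx * σy * t) with hK3
  have ha1p : 0 < a1 := by positivity
  have hc1p : 0 < c1 := by positivity
  have ha2p : 0 < a2 := by positivity
  have hc2p : 0 < c2 := by positivity
  have ha3p : 0 < a3 := by positivity
  have hc3p : 0 < c3 := by positivity
  have hK1p : 0 < K1 := by positivity
  have hK2p : 0 < K2 := by positivity
  have hK3p : 0 < K3 := by positivity
  -- discriminants
  have hσx' : σx ≠ 0 := ne_of_gt hσx
  have hσy' : σy ≠ 0 := ne_of_gt hσy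
  have hs' : s ≠ 0 := ne_of_gt hs0
  have ht' : t ≠ 0 := ne_of_gt ht0
  have hw' : w ≠ 0 := ne_of_gt hw0
  have hπ' : Real.pi ≠ 0 := ne_of_gt hπ
  have h1' : (1 - ρ ^ 2) ≠ 0 := ne_of_gt h1
  have hd1 : a1 * c1 - b1 ^ 2 = (1 / (2 * s * σx * σy)) ^ 2 := by
    have key : a1 * c1 - b1 ^ 2 = 1 / (4 * (1 - ρ ^ 2) * σx ^ 2 * σy ^ 2) := by
      rw [ha1, hb1, hc1]; field_simp; ring
    rw [key, show (1 - ρ^2 : ℝ) = s^2 from hs2.symm, div_pow]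
    field_simp; ring
  have hdisc1 : b1 ^ 2 < a1 * c1 := by
    have := pow_pos (by positivity : (0:ℝ) < 1 / (2 * s * σx * σy)) 2
    linarith [hd1]
  have hd2 : a2 * c2 - (0:ℝ) ^ 2 = (1 / (2 * σx * σy)) ^ 2 := by
    rw [ha2, hc2]; field_simp; ring
  have hdisc2 : (0:ℝ) ^ 2 < a2 * c2 := by
    have : (0:ℝ) ^ 2 = 0 := by norm_num
    rw [this]; positivity
  have hd3 : a3 * c3 - b3 ^ 2 = (w / (4 * s * σx * σy)) ^ 2 := by
    have key : a3 * c3 - b3 ^ 2 = (4 - ρ ^ 2) / (16 * (1 - ρ ^ 2) * σx ^ 2 * σy ^ 2) := by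
      rw [ha3, hb3, hc3, ha1, hb1, hc1, ha2, hc2]; field_simp; ring
    rw [key, show (4 - ρ^2 : ℝ) = w^2 from hw2.symm,
      show (1 - ρ^2 : ℝ) = s^2 from hs2.symm, div_pow]
    field_simp; ring
  have hdisc3 : b3 ^ 2 < a3 * c3 := by
    have := pow_pos (by positivity : (0:ℝ) < w / (4 * s * σx * σy)) 2
    linarith [hd3]
  -- pointwise forms
  have hF1 : ∀ p : ℝ × ℝ, fXY p
      = K1 * Real.exp (-(a1 * p.1 ^ 2 + 2 * b1 * p.1 * p.2 + c1 * p.2 ^ 2)) := by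
    rintro ⟨x, y⟩
    rw [hfXY x y]
    congr 1
    congr 1
    rw [ha1, hb1, hc1]
    field_simp
    ring
  have hF2 : ∀ p : ℝ × ℝ, fX p.1 * fY p.2
      = K2 * Real.exp (-(a2 * p.1 ^ 2 + 2 * 0 * p.1 * p.2 + c2 * p.2 ^ 2)) := by
    rintro ⟨x, y⟩
    rw [hfX x, hfY y, hK2]
    rw [show (σx * Real.sqrt (2*Real.pi))⁻¹ * Real.exp (-x^2/(2*σx^2)) *
        ((σy * Real.sqrt (2*Real.pi))⁻¹ * Real.exp (-y^2/(2*σy^2)))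
      = ((σx * Real.sqrt (2*Real.pi)) * (σy * Real.sqrt (2*Real.pi)))⁻¹ *
        (Real.exp (-x^2/(2*σx^2)) * Real.exp (-y^2/(2*σy^2))) by
        rw [mul_inv]; ring]
    rw [← Real.exp_add]
    congr 1
    · rw [show (σx * Real.sqrt (2*Real.pi)) * (σy * Real.sqrt (2*Real.pi))
        = 2 * Real.pi * σx * σy by linear_combination σx * σy * h2π, one_div]
    · congr 1
      rw [ha2, hc2]
      field_simp
      ring
  have hF3 : ∀ p : ℝ × ℝ, Real.sqrt (fXY p * (fX p.1 * fY p.2))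
      = K3 * Real.exp (-(a3 * p.1 ^ 2 + 2 * b3 * p.1 * p.2 + c3 * p.2 ^ 2)) := by
    intro p
    rw [hF1 p, hF2 p]
    rw [show K1 * Real.exp (-(a1 * p.1 ^ 2 + 2 * b1 * p.1 * p.2 + c1 * p.2 ^ 2)) *
        (K2 * Real.exp (-(a2 * p.1 ^ 2 + 2 * 0 * p.1 * p.2 + c2 * p.2 ^ 2)))
      = (K3 * Real.exp (-(a3 * p.1 ^ 2 + 2 * b3 * p.1 * p.2 + c3 * p.2 ^ 2))) ^ 2 by
        rw [mul_pow, sq (Real.exp _), ← Real.exp_add]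
        have hKK : K1 * K2 = K3 ^ 2 := by
          rw [hK1, hK2, hK3, show s = t^2 from ht2.symm]
          field_simp
        rw [show K1 * Real.exp (-(a1 * p.1 ^ 2 + 2 * b1 * p.1 * p.2 + c1 * p.2 ^ 2)) *
            (K2 * Real.exp (-(a2 * p.1 ^ 2 + 2 * 0 * p.1 * p.2 + c2 * p.2 ^ 2)))
          = K1 * K2 * (Real.exp (-(a1 * p.1 ^ 2 + 2 * b1 * p.1 * p.2 + c1 * p.2 ^ 2)) *
            Real.exp (-(a2 * p.1 ^ 2 + 2 * 0 * p.1 * p.2 + c2 * p.2 ^ 2))) by ring,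
          ← Real.exp_add, hKK]
        congr 2
        rw [ha3, hb3, hc3]
        ring]
    exact Real.sqrt_sq (by positivity)
  -- nonnegativity
  have hnn1 : ∀ p : ℝ × ℝ, 0 ≤ fXY p := fun p => by rw [hF1 p]; positivity
  have hnn2 : ∀ p : ℝ × ℝ, 0 ≤ fX p.1 * fY p.2 := fun p => by rw [hF2 p]; positivity
  -- integrability
  have hI1 : Integrable fXY volume := by
    have := (gauss2_integrable a1 b1 c1 ha1p hc1p hdisc1).const_mul K1
    exact this.congr (by filter_upwards with p; rw [hF1 p])
  have hI2 : Integrable (fun p : ℝ × ℝ => fX p.1 * fY p.2) volume := by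
    have := (gauss2_integrable a2 0 c2 ha2p hc2p hdisc2).const_mul K2
    exact this.congr (by filter_upwards with p; rw [hF2 p])
  have hI3 : Integrable (fun p : ℝ × ℝ => Real.sqrt (fXY p * (fX p.1 * fY p.2))) volume := by
    have := (gauss2_integrable a3 b3 c3 ha3p hc3p hdisc3).const_mul K3
    exact this.congr (by filter_upwards with p; rw [hF3 p])
  -- integral values
  have hJ1 : (∫ p : ℝ × ℝ, fXY p) = 1 := by
    rw [show (fun p : ℝ × ℝ => fXY p) = fun p : ℝ × ℝ =>
        K1 * Real.exp (-(a1 * p.1 ^ 2 + 2 * b1 * p.1 * p.2 + c1 * p.2 ^ 2)) from funext hF1]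
    rw [integral_const_mul, gauss2_integral a1 b1 c1 ha1p hc1p hdisc1, hd1,
      Real.sqrt_sq (by positivity), hK1]
    field_simp
  have hJ2 : (∫ p : ℝ × ℝ, fX p.1 * fY p.2) = 1 := by
    rw [show (fun p : ℝ × ℝ => fX p.1 * fY p.2) = fun p : ℝ × ℝ =>
        K2 * Real.exp (-(a2 * p.1 ^ 2 + 2 * 0 * p.1 * p.2 + c2 * p.2 ^ 2)) from funext hF2]
    rw [integral_const_mul, gauss2_integral a2 0 c2 ha2p hc2p hdisc2, hd2,
      Real.sqrt_sq (by positivity), hK2]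
    field_simp
  have hJ3 : (∫ p : ℝ × ℝ, Real.sqrt (fXY p * (fX p.1 * fY p.2))) = 2 * t / w := by
    rw [show (fun p : ℝ × ℝ => Real.sqrt (fXY p * (fX p.1 * fY p.2))) = fun p : ℝ × ℝ =>
        K3 * Real.exp (-(a3 * p.1 ^ 2 + 2 * b3 * p.1 * p.2 + c3 * p.2 ^ 2)) from funext hF3]
    rw [integral_const_mul, gauss2_integral a3 b3 c3 ha3p hc3p hdisc3, hd3,
      Real.sqrt_sq (by positivity), hK3]
    rw [show s = t^2 from ht2.symm]
    field_simp
    ring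
  -- expand the squared difference
  have hexp : ∀ p : ℝ × ℝ, (Real.sqrt (fXY p) - Real.sqrt (fX p.1 * fY p.2)) ^ 2
      = fXY p + fX p.1 * fY p.2 - 2 * Real.sqrt (fXY p * (fX p.1 * fY p.2)) := by
    intro p
    rw [sub_sq, Real.sq_sqrt (hnn1 p), Real.sq_sqrt (hnn2 p), mul_assoc,
      ← Real.sqrt_mul (hnn1 p)]
    ring
  have hsplit : (∫ p : ℝ × ℝ, (Real.sqrt (fXY p) - Real.sqrt (fX p.1 * fY p.2)) ^ 2)
      = 1 + 1 - 2 * (2 * t / w) := by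
    rw [show (fun p : ℝ × ℝ => (Real.sqrt (fXY p) - Real.sqrt (fX p.1 * fY p.2)) ^ 2)
        = fun p : ℝ × ℝ => fXY p + fX p.1 * fY p.2
            - 2 * Real.sqrt (fXY p * (fX p.1 * fY p.2)) from funext hexp]
    have hIa : Integrable (fun p : ℝ × ℝ => fXY p + fX p.1 * fY p.2) volume := hI1.add hI2
    have hIb : Integrable (fun p : ℝ × ℝ =>
        2 * Real.sqrt (fXY p * (fX p.1 * fY p.2))) volume := hI3.const_mul 2
    rw [integral_sub hIa hIb, integral_add hI1 hI2, integral_const_mul, hJ1, hJ2, hJ3]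
  rw [hsplit]
  congr 1
  have hrq : (1 - ρ ^ 2) ^ ((1:ℝ)/4) = t := by
    have h14 : ((1 - ρ ^ 2 : ℝ) ^ ((1:ℝ)/2)) ^ ((1:ℝ)/2) = (1 - ρ ^ 2 : ℝ) ^ ((1:ℝ)/4) := by
      rw [← Real.rpow_mul h1.le]; norm_num
    rw [← h14, ← Real.sqrt_eq_rpow, ← Real.sqrt_eq_rpow, ← hs, ← ht]
  have hw4 : (1 - ρ ^ 2 / 4) ^ ((1:ℝ)/2) = w / 2 := by
    rw [← Real.sqrt_eq_rpow, show (1 - ρ ^ 2 / 4 : ℝ) = (4 - ρ ^ 2) / 4 by ring,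
      Real.sqrt_div h4.le, ← hw,
      show Real.sqrt (4:ℝ) = 2 by
        rw [show (4:ℝ) = 2 ^ 2 by norm_num, Real.sqrt_sq (by norm_num : (0:ℝ) ≤ 2)]]
  rw [hrq, hw4]
  field_simp
  ring
end

section
/- The function M : [0,1) → ℝ defined by M(ρ) = √(1 − (1−ρ²)^{1/4}/(1−ρ²/4)^{1/2}) is well defined (i.e., (1−ρ²)^{1/4} ≤ (1−ρ²/4)^{1/2} for all ρ ∈ [0,1)), satisfies M(0) = 0, takes values in [0,1), is strictly increasing on [0,1), and M(ρ) → 1 as ρ → 1⁻. -/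
private lemma rpow_quarter_pow4 {x : ℝ} (hx : 0 ≤ x) :
    (x ^ ((1:ℝ)/4)) ^ (4:ℕ) = x := by
  rw [← Real.rpow_natCast (x ^ ((1:ℝ)/4)) 4, ← Real.rpow_mul hx]
  norm_num

private lemma rpow_half_pow4 {y : ℝ} (hy : 0 ≤ y) :
    (y ^ ((1:ℝ)/2)) ^ (4:ℕ) = y ^ 2 := by
  rw [← Real.rpow_natCast (y ^ ((1:ℝ)/2)) 4, ← Real.rpow_mul hy,
    ← Real.rpow_natCast y 2]
  norm_num

private lemma key_ineq {ρ : ℝ} (hρ : ρ ∈ Set.Ico (0:ℝ) 1) :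
    (1 - ρ ^ 2) ^ ((1 : ℝ) / 4) ≤ (1 - ρ ^ 2 / 4) ^ ((1 : ℝ) / 2) := by
  obtain ⟨h0, h1⟩ := hρ
  have hx : (0:ℝ) ≤ 1 - ρ ^ 2 := by nlinarith
  have hy : (0:ℝ) ≤ 1 - ρ ^ 2 / 4 := by nlinarith
  have h4 : ((1 - ρ ^ 2) ^ ((1:ℝ)/4)) ^ (4:ℕ) ≤ ((1 - ρ ^ 2 / 4) ^ ((1:ℝ)/2)) ^ (4:ℕ) := by
    rw [rpow_quarter_pow4 hx, rpow_half_pow4 hy]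
    nlinarith
  exact le_of_pow_le_pow_left₀ (by norm_num) (Real.rpow_nonneg hy _) h4

/-- Properties of the function `M(ρ) = √(1 − (1−ρ²)^{1/4}/(1−ρ²/4)^{1/2})`
giving the mutual dependence of a centered bivariate normal pair with
correlation `ρ`: it is well defined on `[0,1)`, vanishes at `0`, takes values
in `[0,1)`, is strictly increasing on `[0,1)`, and tends to `1` as `ρ → 1⁻`. -/
theorem normal_mutual_dependence_function_properties :
    let M : ℝ → ℝ := fun ρ =>
      Real.sqrt (1 - (1 - ρ ^ 2) ^ ((1 : ℝ) / 4) / (1 - ρ ^ 2 / 4) ^ ((1 : ℝ) / 2))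
    (∀ ρ ∈ Set.Ico (0 : ℝ) 1,
        (1 - ρ ^ 2) ^ ((1 : ℝ) / 4) ≤ (1 - ρ ^ 2 / 4) ^ ((1 : ℝ) / 2)) ∧
    M 0 = 0 ∧
    (∀ ρ ∈ Set.Ico (0 : ℝ) 1, M ρ ∈ Set.Ico (0 : ℝ) 1) ∧
    StrictMonoOn M (Set.Ico (0 : ℝ) 1) ∧
    Filter.Tendsto M (nhdsWithin 1 (Set.Iio 1)) (nhds 1) := by
  intro M
  -- basic facts
  have hx : ∀ ρ ∈ Set.Ico (0:ℝ) 1, (0:ℝ) < 1 - ρ ^ 2 := by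
    rintro ρ ⟨h0, h1⟩; nlinarith
  have hy : ∀ ρ ∈ Set.Ico (0:ℝ) 1, (0:ℝ) < 1 - ρ ^ 2 / 4 := by
    rintro ρ ⟨h0, h1⟩; nlinarith
  have hgpos : ∀ ρ ∈ Set.Ico (0:ℝ) 1,
      0 < (1 - ρ ^ 2) ^ ((1:ℝ)/4) / (1 - ρ ^ 2 / 4) ^ ((1:ℝ)/2) := by
    intro ρ hρ
    exact div_pos (Real.rpow_pos_of_pos (hx ρ hρ) _) (Real.rpow_pos_of_pos (hy ρ hρ) _)
  have hgle : ∀ ρ ∈ Set.Ico (0:ℝ) 1,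
      (1 - ρ ^ 2) ^ ((1:ℝ)/4) / (1 - ρ ^ 2 / 4) ^ ((1:ℝ)/2) ≤ 1 := by
    intro ρ hρ
    rw [div_le_one (Real.rpow_pos_of_pos (hy ρ hρ) _)]
    exact key_ineq hρ
  -- strict antitonicity of the inner quotient
  have hganti : ∀ a ∈ Set.Ico (0:ℝ) 1, ∀ b ∈ Set.Ico (0:ℝ) 1, a < b →
      (1 - b ^ 2) ^ ((1:ℝ)/4) / (1 - b ^ 2 / 4) ^ ((1:ℝ)/2)
        < (1 - a ^ 2) ^ ((1:ℝ)/4) / (1 - a ^ 2 / 4) ^ ((1:ℝ)/2) := by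
    intro a ha b hb hab
    have hxa := hx a ha; have hya := hy a ha
    have hxb := hx b hb; have hyb := hy b hb
    rw [div_lt_div_iff₀ (Real.rpow_pos_of_pos hyb _) (Real.rpow_pos_of_pos hya _)]
    have h4 : ((1 - b ^ 2) ^ ((1:ℝ)/4) * (1 - a ^ 2 / 4) ^ ((1:ℝ)/2)) ^ (4:ℕ)
        < ((1 - a ^ 2) ^ ((1:ℝ)/4) * (1 - b ^ 2 / 4) ^ ((1:ℝ)/2)) ^ (4:ℕ) := by
      rw [mul_pow, mul_pow, rpow_quarter_pow4 hxa.le, rpow_quarter_pow4 hxb.le,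
        rpow_half_pow4 hya.le, rpow_half_pow4 hyb.le]
      have hs : a ^ 2 < b ^ 2 := by nlinarith [ha.1, hb.1]
      have hfac : (0:ℝ) < 1/2 + (a ^ 2 + b ^ 2 - a ^ 2 * b ^ 2) / 16 := by
        nlinarith [sq_nonneg (a*b), ha.1, hb.1]
      nlinarith [mul_pos (sub_pos.2 hs) hfac]
    exact lt_of_pow_lt_pow_left₀ 4
      (mul_nonneg (Real.rpow_nonneg hxa.le _) (Real.rpow_nonneg hyb.le _)) h4
  refine ⟨fun ρ hρ => key_ineq hρ, ?_, ?_, ?_, ?_⟩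
  · show Real.sqrt _ = 0
    norm_num
  · intro ρ hρ
    constructor
    · exact Real.sqrt_nonneg _
    · have : 1 - (1 - ρ ^ 2) ^ ((1:ℝ)/4) / (1 - ρ ^ 2 / 4) ^ ((1:ℝ)/2) < 1 := by
        linarith [hgpos ρ hρ]
      calc M ρ < Real.sqrt 1 := by
            apply Real.sqrt_lt_sqrt (by linarith [hgle ρ hρ]) this
        _ = 1 := Real.sqrt_one
  · intro a ha b hb hab
    apply Real.sqrt_lt_sqrt (by linarith [hgle a ha])
    have := hganti a ha b hb hab
    linarith
  · -- tendsto 1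
    have hcont : ContinuousAt M 1 := by
      apply Real.continuous_sqrt.continuousAt.comp
      apply ContinuousAt.sub continuousAt_const
      apply ContinuousAt.div
      · apply ContinuousAt.rpow_const
        · exact (continuousAt_const.sub (continuousAt_pow (1:ℝ) 2))
        · right; norm_num
      · apply ContinuousAt.rpow_const
        · exact (continuousAt_const.sub ((continuousAt_pow (1:ℝ) 2).div_const 4))
        · right; norm_num
      · norm_num
    have hM1 : M 1 = 1 := by
      show Real.sqrt _ = 1
      norm_num
    have := hcont.tendsto
    rw [hM1] at this
    exact this.mono_left nhdsWithin_le_nhds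
end

section
/- Let f_c > 0 and define sinc_{f_c} : ℝ → ℝ by sinc_{f_c}(x) = sin(π f_c x)/(π x) for x ≠ 0 and sinc_{f_c}(0) = f_c. Then for all a, b ∈ ℝ, ∫_ℝ sinc_{f_c}(x − a) · sinc_{f_c}(x − b) dx = sinc_{f_c}(a − b). In particular, ∫_ℝ sinc_{f_c}(x)² dx = f_c. -/
open MeasureTheory

/-- The band-limited sinc kernel with cutoff frequency `fc`:
`sinc_{fc}(x) = sin(π fc x)/(π x)` for `x ≠ 0` and `sinc_{fc}(0) = fc`. -/
noncomputable def sincF (fc : ℝ) (x : ℝ) : ℝ :=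
  if x = 0 then fc else Real.sin (Real.pi * fc * x) / (Real.pi * x)

/-!
The modulated box `u_c(t) = 𝟙_{[-fc/2, fc/2]}(t) e^{2πict}` has Fourier transform
`sincF fc (· - c)`, so by the convolution theorem `sincF fc (· - a) * sincF fc (· - b)` is the
Fourier transform of `w = u_a ⋆ u_b`. This product is integrable, being a product of two `L²`
functions, and `w` is continuous at `0` by dominated convergence, since `u_b` is bounded and
continuous off the two endpoints. Fourier inversion at `0` therefore gives
`∫ sincF fc (x - a) * sincF fc (x - b) dx = w 0 = ∫ u_a(t) u_b(-t) dt = ∫ u_{a-b}`,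
which is `sincF fc (a - b)`.
-/

open Real Set Complex Filter
open scoped FourierTransform Convolution

theorem integral_fourier_mul_fourier_eq_convolution_zero
    {V : Type*} [NormedAddCommGroup V] [InnerProductSpace ℝ V] [FiniteDimensional ℝ V]
    [MeasurableSpace V] [BorelSpace V] {f g : V → ℂ} (hf : Integrable f) (hg : Integrable g)
    (hfg : Integrable (𝓕 f * 𝓕 g))
    (hc : ContinuousAt (f ⋆[ContinuousLinearMap.mul ℂ ℂ] g) 0) :
    ∫ ξ, 𝓕 f ξ * 𝓕 g ξ = (f ⋆[ContinuousLinearMap.mul ℂ ℂ] g) 0 := by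
  have hF : 𝓕 (f ⋆[ContinuousLinearMap.mul ℂ ℂ] g) = 𝓕 f * 𝓕 g :=
    funext (Real.fourier_mul_convolution_eq hf hg)
  have h := (hf.integrable_convolution _ hg).fourierInv_fourier_eq (hF ▸ hfg) hc
  simpa [hF, Real.fourierInv_eq] using h

section Convolution

variable {𝕜 G E E' F : Type*} [NontriviallyNormedField 𝕜]
  [NormedAddCommGroup E] [NormedSpace 𝕜 E] [NormedAddCommGroup E'] [NormedSpace 𝕜 E']
  [NormedAddCommGroup F] [NormedSpace 𝕜 F] [NormedSpace ℝ F]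
  [NormedAddCommGroup G] [MeasurableSpace G] [BorelSpace G]
  {μ : Measure G} [μ.IsAddLeftInvariant] [μ.IsNegInvariant]

theorem continuousAt_convolution_of_ae_continuousAt (L : E →L[𝕜] E' →L[𝕜] F) {f : G → E}
    {g : G → E'} {C : ℝ} (hf : Integrable f μ) (hg : AEStronglyMeasurable g μ)
    (hgC : ∀ y, ‖g y‖ ≤ C) (hgc : ∀ᵐ y ∂μ, ContinuousAt g y) (x₀ : G) :
    ContinuousAt (f ⋆[L, μ] g) x₀ := by
  have hsub : ∀ x, Measure.QuasiMeasurePreserving (fun t => x - t) μ μ := fun x =>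
    (Measure.measurePreserving_sub_left μ x).quasiMeasurePreserving
  simp only [ContinuousAt, convolution_def]
  refine tendsto_integral_filter_of_dominated_convergence (fun t => ‖L‖ * ‖f t‖ * C) ?_ ?_
    ((hf.norm.const_mul _).mul_const _) ?_
  · exact Eventually.of_forall fun x =>
      L.aestronglyMeasurable_comp₂ hf.aestronglyMeasurable
        (hg.comp_quasiMeasurePreserving (hsub x))
  · refine Eventually.of_forall fun x => Eventually.of_forall fun t => ?_
    calc ‖L (f t) (g (x - t))‖ ≤ ‖L‖ * ‖f t‖ * ‖g (x - t)‖ := L.le_opNorm₂ _ _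
      _ ≤ ‖L‖ * ‖f t‖ * C := by gcongr; exact hgC _
  · filter_upwards [(hsub x₀).ae hgc] with t ht
    exact ((L (f t)).continuous.continuousAt.comp ht).comp (f := fun x => x - t)
      (continuous_sub_right t).continuousAt

end Convolution

theorem sincF_eq_mul_sinc (fc x : ℝ) : sincF fc x = fc * sinc (π * fc * x) := by
  rcases eq_or_ne fc 0 with rfl | hfc
  · simp [sincF]
  rcases eq_or_ne x 0 with rfl | hx
  · simp [sincF]
  rw [sincF, if_neg hx, sinc_of_ne_zero (by positivity)]
  field_simp

theorem sincF_neg (fc x : ℝ) : sincF fc (-x) = sincF fc x := by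
  simp only [sincF_eq_mul_sinc, mul_neg, sinc_neg]

theorem continuous_sincF (fc : ℝ) : Continuous (sincF fc) := by
  simp only [funext (sincF_eq_mul_sinc fc)]
  fun_prop

theorem abs_sincF_le (fc x : ℝ) : |sincF fc x| ≤ |fc| := by
  rw [sincF_eq_mul_sinc, abs_mul]
  exact mul_le_of_le_one_right (abs_nonneg fc) (abs_sinc_le_one _)

theorem abs_mul_sincF_le_one (fc x : ℝ) : |x * sincF fc x| ≤ 1 := by
  rcases eq_or_ne x 0 with rfl | hx
  · simp
  rw [sincF, if_neg hx,
    show x * (Real.sin (π * fc * x) / (π * x)) = Real.sin (π * fc * x) / π by field_simp,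
    abs_div, abs_of_pos pi_pos, div_le_one pi_pos]
  exact (abs_sin_le_one _).trans (by linarith [pi_gt_three])

theorem sq_sincF_le (fc x : ℝ) : sincF fc x ^ 2 ≤ (fc ^ 2 + 1) * (1 + x ^ 2)⁻¹ := by
  rw [← div_eq_mul_inv, le_div_iff₀ (by positivity)]
  have h₀ : sincF fc x ^ 2 ≤ fc ^ 2 := sq_le_sq.mpr (abs_sincF_le fc x)
  have h₁ : (x * sincF fc x) ^ 2 ≤ 1 :=
    (sq_le_one_iff_abs_le_one _).mpr (abs_mul_sincF_le_one fc x)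
  nlinarith

theorem memLp_sincF (fc : ℝ) : MemLp (sincF fc) 2 := by
  have hmeas := (continuous_sincF fc).aestronglyMeasurable (μ := volume)
  refine (memLp_two_iff_integrable_sq hmeas).mpr ?_
  refine (integrable_inv_one_add_sq.const_mul (fc ^ 2 + 1)).mono' (hmeas.pow 2) ?_
  refine Eventually.of_forall fun x => ?_
  rw [Real.norm_of_nonneg (sq_nonneg _)]
  exact sq_sincF_le fc x

theorem integrable_sincF_sub_mul_sincF_sub (fc a b : ℝ) :
    Integrable fun x => sincF fc (x - a) * sincF fc (x - b) :=
  ((memLp_sincF fc).comp_measurePreserving (measurePreserving_sub_right volume a)).integrable_mul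
    ((memLp_sincF fc).comp_measurePreserving (measurePreserving_sub_right volume b))

theorem intervalIntegral_cexp_eq_sincF (fc c : ℝ) :
    ∫ t in -(fc / 2)..fc / 2, cexp (2 * π * c * t * I) = sincF fc c := by
  rcases eq_or_ne c 0 with rfl | hc
  · simp [sincF]
  have hω : (2 * π * c * I : ℂ) ≠ 0 := by simp [hc, pi_ne_zero, I_ne_zero]
  rw [intervalIntegral.integral_congr (g := fun t : ℝ => cexp (2 * π * c * I * t))
    (fun t _ => by ring_nf), integral_exp_mul_complex hω, sincF, if_neg hc]
  push_cast
  rw [show 2 * π * c * I * (fc / 2) = (π * fc * c : ℂ) * I by ring,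
    show 2 * π * c * I * -(fc / 2) = -(π * fc * c : ℂ) * I by ring,
    exp_mul_I, exp_mul_I, Complex.cos_neg, Complex.sin_neg]
  field_simp
  ring

section ModulatedBox

variable {fc : ℝ}

noncomputable def modulatedBox (fc c : ℝ) : ℝ → ℂ :=
  indicator (Icc (-(fc / 2)) (fc / 2)) fun t => cexp (2 * π * c * t * I)

theorem integral_modulatedBox (hfc : 0 ≤ fc) (c : ℝ) :
    ∫ t, modulatedBox fc c t = sincF fc c := by
  rw [modulatedBox, integral_indicator measurableSet_Icc, integral_Icc_eq_integral_Ioc,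
    ← intervalIntegral.integral_of_le (by linarith), intervalIntegral_cexp_eq_sincF]

theorem integrable_modulatedBox (fc c : ℝ) : Integrable (modulatedBox fc c) :=
  (Continuous.integrableOn_Icc (by fun_prop)).integrable_indicator measurableSet_Icc

theorem norm_modulatedBox_le_one (fc c t : ℝ) : ‖modulatedBox fc c t‖ ≤ 1 := by
  rw [modulatedBox, norm_indicator_eq_indicator_norm]
  refine indicator_apply_le' (fun _ => ?_) fun _ => zero_le_one
  simp [Complex.norm_exp]

theorem ae_continuousAt_modulatedBox (hfc : 0 ≤ fc) (c : ℝ) :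
    ∀ᵐ t, ContinuousAt (modulatedBox fc c) t := by
  have hnull : volume (frontier (Icc (-(fc / 2)) (fc / 2))) = 0 := by
    rw [frontier_Icc (by linarith)]
    exact (toFinite _).measure_zero _
  filter_upwards [measure_eq_zero_iff_ae_notMem.mp hnull] with t ht
  exact (Continuous.continuousOn (by fun_prop)).continuousAt_indicator ht

theorem exp_mul_modulatedBox (fc c ξ t : ℝ) :
    cexp (↑(-2 * π * t * ξ) * I) * modulatedBox fc c t = modulatedBox fc (c - ξ) t := by
  simp only [modulatedBox, indicator_apply]
  split_ifs
  · rw [← Complex.exp_add]; push_cast; ring_nf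
  · rw [mul_zero]

theorem fourier_modulatedBox (hfc : 0 ≤ fc) (c ξ : ℝ) :
    𝓕 (modulatedBox fc c) ξ = sincF fc (ξ - c) := by
  simp only [Real.fourier_real_eq_integral_exp_smul, smul_eq_mul, exp_mul_modulatedBox,
    integral_modulatedBox hfc]
  rw [← sincF_neg, neg_sub]

theorem modulatedBox_mul_modulatedBox_neg (fc a b t : ℝ) :
    modulatedBox fc a t * modulatedBox fc b (-t) = modulatedBox fc (a - b) t := by
  simp only [modulatedBox, indicator_apply, Set.neg_mem_Icc_iff, neg_neg]
  split_ifs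
  · rw [← Complex.exp_add]; push_cast; ring_nf
  · rw [mul_zero]

theorem convolution_modulatedBox_zero (hfc : 0 ≤ fc) (a b : ℝ) :
    (modulatedBox fc a ⋆[ContinuousLinearMap.mul ℂ ℂ] modulatedBox fc b) 0 =
      sincF fc (a - b) := by
  simp only [convolution_def, ContinuousLinearMap.mul_apply', zero_sub,
    modulatedBox_mul_modulatedBox_neg, integral_modulatedBox hfc]

theorem integral_sincF_sub_mul_sincF_sub (hfc : 0 ≤ fc) (a b : ℝ) :
    ∫ x, sincF fc (x - a) * sincF fc (x - b) = sincF fc (a - b) := by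
  have hF : ∀ c, 𝓕 (modulatedBox fc c) = fun ξ => (sincF fc (ξ - c) : ℂ) :=
    fun c => funext (fourier_modulatedBox hfc c)
  have hint : Integrable (𝓕 (modulatedBox fc a) * 𝓕 (modulatedBox fc b)) := by
    convert (integrable_sincF_sub_mul_sincF_sub fc a b).ofReal (𝕜 := ℂ) using 1
    ext ξ
    simp [hF]
  have hcont := continuousAt_convolution_of_ae_continuousAt (ContinuousLinearMap.mul ℂ ℂ)
    (integrable_modulatedBox fc a) (integrable_modulatedBox fc b).aestronglyMeasurable
    (norm_modulatedBox_le_one fc b) (ae_continuousAt_modulatedBox hfc b) 0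
  have key := integral_fourier_mul_fourier_eq_convolution_zero (integrable_modulatedBox fc a)
    (integrable_modulatedBox fc b) hint hcont
  simp only [hF, convolution_modulatedBox_zero hfc] at key
  apply ofReal_injective
  rw [← integral_complex_ofReal]
  exact_mod_cast key

end ModulatedBox

/-- Reproducing (autocorrelation) identity for the sinc kernel:
`∫ sinc_{fc}(x − a) sinc_{fc}(x − b) dx = sinc_{fc}(a − b)`; in particular
`∫ sinc_{fc}(x)² dx = fc`. -/
theorem sinc_reproducing_identity (fc : ℝ) (hfc : 0 < fc) :
    (∀ a b : ℝ, ∫ x : ℝ, sincF fc (x - a) * sincF fc (x - b) = sincF fc (a - b)) ∧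
    (∫ x : ℝ, (sincF fc x) ^ 2) = fc := by
  refine ⟨integral_sincF_sub_mul_sincF_sub hfc.le, ?_⟩
  have h := integral_sincF_sub_mul_sincF_sub hfc.le 0 0
  simp only [sub_zero, ← sq] at h
  rw [h, sincF, if_pos rfl]
end
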